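/- arXiv:0810.1572 — 6 statements merged into one kernel-verified Lean document; each statement's English description precedes it below -/
import Mathlib

section
/- For real numbers x₁,…,xₙ with n ≥ 2, letting R = max xᵢ - min xᵢ be the range and Q = ∑ᵢ (xᵢ - x̄)², one has R²/2 ≤ Q ≤ nR²/4. -/
open Finset

/-!
Both bounds compare `Q` with sums of squared deviations from other centres. Since the mean
minimises `c ↦ ∑ (xᵢ - c)²`, taking `c` the midpoint of `[min, max]` bounds every term by
`R² / 4`, giving `Q ≤ n R² / 4`. Conversely, the two terms at the indices of the maximum and
the minimum already contribute at least `R² / 2`, whatever the centre.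
-/

section

variable {ι : Type*} (s : Finset ι) (x : ι → ℝ)

theorem sum_sq_sub_eq_sum_sq_sub_mean_add (c : ℝ) :
    ∑ i ∈ s, (x i - c) ^ 2 =
      ∑ i ∈ s, (x i - (∑ j ∈ s, x j) / #s) ^ 2 + #s * ((∑ j ∈ s, x j) / #s - c) ^ 2 := by
  rcases s.eq_empty_or_nonempty with rfl | hs
  · simp
  set μ := (∑ j ∈ s, x j) / #s
  have hsum : ∑ j ∈ s, x j = #s * μ :=
    (mul_div_cancel₀ _ (Nat.cast_ne_zero.2 hs.card_pos.ne')).symm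
  have hdiff : ∀ i ∈ s, (x i - c) ^ 2 = (x i - μ) ^ 2 + ((μ - c) ^ 2 + 2 * (μ - c) * (x i - μ)) :=
    fun i _ => by ring
  rw [sum_congr rfl hdiff, sum_add_distrib, sum_add_distrib, ← mul_sum, sum_sub_distrib, hsum,
    sum_const, nsmul_eq_mul, sum_const, nsmul_eq_mul]
  ring

theorem sum_sq_sub_mean_le_card_mul_sq {m M : ℝ} (hx : ∀ i ∈ s, x i ∈ Set.Icc m M) :
    ∑ i ∈ s, (x i - (∑ j ∈ s, x j) / #s) ^ 2 ≤ #s * (M - m) ^ 2 / 4 := by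
  have hterm : ∀ i ∈ s, (x i - (m + M) / 2) ^ 2 ≤ (M - m) ^ 2 / 4 := fun i hi => by
    obtain ⟨hm, hM⟩ := hx i hi
    nlinarith
  calc ∑ i ∈ s, (x i - (∑ j ∈ s, x j) / #s) ^ 2
      ≤ ∑ i ∈ s, (x i - (m + M) / 2) ^ 2 := by
        rw [sum_sq_sub_eq_sum_sq_sub_mean_add s x ((m + M) / 2)]
        exact le_add_of_nonneg_right (by positivity)
    _ ≤ ∑ _i ∈ s, (M - m) ^ 2 / 4 := sum_le_sum hterm
    _ = #s * (M - m) ^ 2 / 4 := by rw [sum_const, nsmul_eq_mul]; ring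

theorem sq_sub_div_two_le_sum_sq_sub {a b : ι} (ha : a ∈ s) (hb : b ∈ s) (c : ℝ) :
    (x a - x b) ^ 2 / 2 ≤ ∑ i ∈ s, (x i - c) ^ 2 := by
  classical
  by_cases hab : a = b
  · subst hab
    simpa using sum_nonneg fun i _ => sq_nonneg (x i - c)
  calc (x a - x b) ^ 2 / 2 ≤ (x a - c) ^ 2 + (x b - c) ^ 2 := by
        nlinarith [sq_nonneg (x a + x b - 2 * c)]
    _ = ∑ i ∈ {a, b}, (x i - c) ^ 2 := by rw [sum_pair hab]
    _ ≤ ∑ i ∈ s, (x i - c) ^ 2 :=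
        sum_le_sum_of_subset_of_nonneg (insert_subset ha (singleton_subset_iff.2 hb))
          fun i _ _ => sq_nonneg _

end

theorem range_bounds_sample_variance_general (n : ℕ) (x : Fin n → ℝ)
    (hne : (Finset.univ : Finset (Fin n)).Nonempty)
    (R Q : ℝ)
    (hR : R = Finset.univ.sup' hne x - Finset.univ.inf' hne x)
    (hQ : Q = ∑ i, (x i - (∑ j, x j) / n)^2) :
    R^2 / 2 ≤ Q ∧ Q ≤ n * R^2 / 4 := by
  obtain ⟨a, -, ha⟩ := exists_mem_eq_sup' hne x
  obtain ⟨b, -, hb⟩ := exists_mem_eq_inf' hne x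
  have hcard : (#(univ : Finset (Fin n)) : ℝ) = n := by simp
  subst hR hQ
  constructor
  · rw [ha, hb]
    exact sq_sub_div_two_le_sum_sq_sub univ x (mem_univ a) (mem_univ b) _
  · have hbound := sum_sq_sub_mean_le_card_mul_sq univ x (m := univ.inf' hne x)
      (M := univ.sup' hne x) fun i _ => ⟨inf'_le x (mem_univ i), le_sup' x (mem_univ i)⟩
    rwa [hcard] at hbound

theorem range_bounds_sample_variance (n : ℕ) (hn : 2 ≤ n) (x : Fin n → ℝ)
    (hne : (Finset.univ : Finset (Fin n)).Nonempty)
    (R Q : ℝ)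
    (hR : R = Finset.univ.sup' hne x - Finset.univ.inf' hne x)
    (hQ : Q = ∑ i, (x i - (∑ j, x j) / n)^2) :
    R^2 / 2 ≤ Q ∧ Q ≤ n * R^2 / 4 :=
  range_bounds_sample_variance_general n x hne R Q hR hQ
end

section
/- Let 0 < p < 1, t > 0, y > 0 and define ψ⁺_p(t,y) = ∫₀¹ exp(-(y + x√(-it))²) p x^{p-1} dx. Then |ψ⁺_p(t,y)| ≤ 2^{-p/2} Γ(p+1) t^{-p/2} y^{-p} exp(-y²). -/
/-! Since `Re (y + x √(t/2) (1 - i))² = y² + x y √(2t)`, the integrand is bounded in modulus by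
`exp (-y²) · p x^(p-1) exp (-a x)` with `a = y √(2t)`. Extending the integral from `(0, 1]` to
`(0, ∞)` bounds it by `exp (-y²) · p Γ(p) a^(-p)`, and `p Γ(p) = Γ(p + 1)`. -/

open MeasureTheory Complex Real

lemma norm_exp_neg_sq_add_mul_one_sub_I (x y s : ℝ) :
    ‖Complex.exp (-((y : ℂ) + x * (s * (1 - I))) ^ 2)‖ =
      Real.exp (-y ^ 2) * Real.exp (-(2 * s * y * x)) := by
  rw [Complex.norm_exp, ← Real.exp_add]
  congr 1
  simp [Complex.mul_re, Complex.mul_im, pow_two]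
  ring

lemma setIntegral_rpow_mul_exp_neg_mul_le {p a : ℝ} (hp : 0 < p) (ha : 0 < a) {S : Set ℝ}
    (hS : S ⊆ Set.Ioi 0) :
    ∫ x in S, x ^ (p - 1) * Real.exp (-(a * x)) ≤ (1 / a) ^ p * Real.Gamma p := by
  have hGamma := Real.integral_rpow_mul_exp_neg_mul_Ioi hp ha
  have hint : IntegrableOn (fun x ↦ x ^ (p - 1) * Real.exp (-(a * x))) (Set.Ioi 0) :=
    .of_integral_ne_zero (by rw [hGamma]; positivity)
  rw [← hGamma]
  refine setIntegral_mono_set hint ?_ (.of_forall hS)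
  filter_upwards [self_mem_ae_restrict measurableSet_Ioi] with x (hx : 0 < x)
  positivity

lemma rpow_neg_two_mul_sqrt_half_mul {p t y : ℝ} (ht : 0 < t) (hy : 0 < y) :
    (1 / (2 * √(t / 2) * y)) ^ p = (2 : ℝ) ^ (-p / 2) * t ^ (-p / 2) * y ^ (-p) := by
  have hsqrt : 2 * √(t / 2) = (2 * t) ^ (1 / 2 : ℝ) := by
    rw [← Real.sqrt_eq_rpow, show 2 * t = 2 ^ 2 * (t / 2) by ring,
      Real.sqrt_mul (by positivity), Real.sqrt_sq zero_le_two]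
  rw [hsqrt, one_div, Real.inv_rpow (by positivity), ← Real.rpow_neg (by positivity),
    Real.mul_rpow (by positivity) hy.le, ← Real.rpow_mul (by positivity),
    Real.mul_rpow zero_le_two ht.le]
  ring_nf

theorem psi_plus_bound_general (p t y : ℝ) (hp : 0 < p) (ht : 0 < t) (hy : 0 < y) :
    ‖(∫ x in Set.Ioc (0:ℝ) 1,
        Complex.exp (-((y:ℂ) + (x:ℂ) * (Real.sqrt (t/2) * (1 - I)))^2) *
          (p * (x:ℂ) ^ ((p:ℂ) - 1)))‖ ≤
      (2:ℝ) ^ (-p/2) * Real.Gamma (p + 1) * t ^ (-p/2) * y ^ (-p) * Real.exp (-y^2) := by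
  set a := 2 * √(t / 2) * y
  have ha : 0 < a := by positivity
  have hnorm : ∀ x ∈ Set.Ioc (0 : ℝ) 1,
      ‖Complex.exp (-((y : ℂ) + x * (√(t / 2) * (1 - I))) ^ 2) * (p * (x : ℂ) ^ ((p : ℂ) - 1))‖ =
        Real.exp (-y ^ 2) * p * (x ^ (p - 1) * Real.exp (-(a * x))) := by
    intro x hx
    rw [norm_mul, norm_exp_neg_sq_add_mul_one_sub_I, norm_mul, Complex.norm_real,
      Complex.norm_cpow_eq_rpow_re_of_pos hx.1, Real.norm_of_nonneg hp.le]
    simp only [Complex.sub_re, Complex.ofReal_re, Complex.one_re]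
    ring
  calc _ ≤ ∫ x in Set.Ioc (0 : ℝ) 1, Real.exp (-y ^ 2) * p * (x ^ (p - 1) * Real.exp (-(a * x))) :=
        (norm_integral_le_integral_norm _).trans_eq (setIntegral_congr_fun measurableSet_Ioc hnorm)
    _ ≤ Real.exp (-y ^ 2) * p * ((1 / a) ^ p * Real.Gamma p) := by
        rw [integral_const_mul]
        gcongr
        exact setIntegral_rpow_mul_exp_neg_mul_le hp ha Set.Ioc_subset_Ioi_self
    _ = _ := by
        rw [rpow_neg_two_mul_sqrt_half_mul ht hy, Real.Gamma_add_one hp.ne']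
        ring

theorem psi_plus_bound (p t y : ℝ) (hp : 0 < p) (hp1 : p < 1) (ht : 0 < t) (hy : 0 < y) :
    ‖(∫ x in Set.Ioc (0:ℝ) 1,
        Complex.exp (-((y:ℂ) + (x:ℂ) * (Real.sqrt (t/2) * (1 - I)))^2) *
          (p * (x:ℂ) ^ ((p:ℂ) - 1)))‖ ≤
      (2:ℝ) ^ (-p/2) * Real.Gamma (p + 1) * t ^ (-p/2) * y ^ (-p) * Real.exp (-y^2) :=
  psi_plus_bound_general p t y hp ht hy
end

section
/- Let 0 < p < 1, n ≥ 2, and define h⁻_p(y) = p ∫₀^∞ exp(-(x-y)²) x^{p-1} dx for y > 0. Then lim_{y→∞} y^{1-p} h⁻_p(y) = p√π, and consequently ∫₀^∞ (h⁻_p(y))ⁿ dy < ∞ whenever np < n-1. -/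
/-!
Split the integral at `x = y / 2`. On `(0, y / 2]` the Gaussian factor is at most `exp (-y² / 4)`,
so this part is negligible against `y ^ (p - 1)`. On `(y / 2, ∞)` the substitution `x = y + t`
turns `y ^ (1 - p)` times the integral into `∫_{t > -y/2} exp (-t²) ((t + y) / y) ^ (p - 1) dt`,
whose integrand is dominated by `2 ^ (1 - p) exp (-t²)` and tends to `exp (-t²)`; dominated
convergence gives `√π`. Since `h⁻_p` is moreover bounded, `(h⁻_p)ⁿ = O(y ^ ((p - 1) n))` is
integrable on `(0, ∞)` as soon as `(p - 1) n < -1`.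
-/

open MeasureTheory Real Filter Set Asymptotics Topology

lemma integrable_exp_neg_sq_sub (y : ℝ) : Integrable fun x : ℝ => exp (-(x - y) ^ 2) := by
  simpa using (integrable_exp_neg_mul_sq one_pos).comp_sub_right y

lemma integral_exp_neg_sq_sub (y : ℝ) : ∫ x, exp (-(x - y) ^ 2) = √π := by
  rw [integral_sub_right_eq_self (fun x => exp (-x ^ 2)) y]
  simpa using integral_gaussian 1

lemma Asymptotics.isBigO_rpow_neg_of_tendsto_rpow_mul {f : ℝ → ℝ} {b L : ℝ}
    (hf : Tendsto (fun y => y ^ b * f y) atTop (𝓝 L)) : f =O[atTop] fun y => y ^ (-b) := by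
  have hO := (isBigO_refl (fun y : ℝ => y ^ (-b)) atTop).mul (hf.isBigO_one ℝ)
  refine hO.congr' ?_ (.of_forall fun y => mul_one _)
  filter_upwards [eventually_gt_atTop 0] with y hy
  rw [← mul_assoc, ← rpow_add hy, neg_add_cancel, rpow_zero, one_mul]

lemma integrableOn_Ici_of_isBigO_rpow {f : ℝ → ℝ} {a b C : ℝ}
    (hfm : AEStronglyMeasurable f) (hfC : ∀ y, ‖f y‖ ≤ C)
    (hf : f =O[atTop] fun y => y ^ a) (ha : a < -1) : IntegrableOn f (Ici b) :=
  (((memLp_top_of_bound hfm C (ae_of_all _ hfC)).locallyIntegrable le_top).locallyIntegrableOn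
    _).integrableOn_of_isBigO_atTop hf (integrableAtFilter_rpow_atTop_iff.2 ha)

variable {p : ℝ}

lemma exp_neg_sq_sub_mul_rpow_nonneg {x : ℝ} (y : ℝ) (hx : 0 ≤ x) :
    0 ≤ exp (-(x - y) ^ 2) * x ^ (p - 1) :=
  mul_nonneg (exp_pos _).le (rpow_nonneg hx _)

lemma exp_neg_sq_sub_mul_rpow_le_rpow {x : ℝ} (y : ℝ) (hx : 0 ≤ x) :
    exp (-(x - y) ^ 2) * x ^ (p - 1) ≤ x ^ (p - 1) :=
  mul_le_of_le_one_left (rpow_nonneg hx _) (exp_le_one_iff.2 (by nlinarith))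

lemma exp_neg_sq_sub_mul_rpow_le_exp {x : ℝ} (y : ℝ) (hp : p ≤ 1) (hx : 1 ≤ x) :
    exp (-(x - y) ^ 2) * x ^ (p - 1) ≤ exp (-(x - y) ^ 2) :=
  mul_le_of_le_one_right (exp_pos _).le (rpow_le_one_of_one_le_of_nonpos hx (by linarith))

lemma integrableOn_exp_neg_sq_sub_mul_rpow (hp : 0 < p) (hp1 : p ≤ 1) (y : ℝ) :
    IntegrableOn (fun x => exp (-(x - y) ^ 2) * x ^ (p - 1)) (Ioi 0) := by
  have hm : Measurable fun x : ℝ => exp (-(x - y) ^ 2) * x ^ (p - 1) := by fun_prop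
  rw [← Ioc_union_Ioi_eq_Ioi zero_le_one]
  refine IntegrableOn.union ?_ ?_
  · refine Integrable.mono'
      (intervalIntegral.intervalIntegrable_rpow' (r := p - 1) (by linarith)).1
      hm.aestronglyMeasurable ((ae_restrict_mem measurableSet_Ioc).mono fun x hx => ?_)
    rw [norm_of_nonneg (exp_neg_sq_sub_mul_rpow_nonneg y hx.1.le)]
    exact exp_neg_sq_sub_mul_rpow_le_rpow y hx.1.le
  · refine Integrable.mono' (integrable_exp_neg_sq_sub y).integrableOn
      hm.aestronglyMeasurable ((ae_restrict_mem measurableSet_Ioi).mono fun x hx => ?_)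
    rw [norm_of_nonneg (exp_neg_sq_sub_mul_rpow_nonneg y (zero_le_one.trans (le_of_lt hx)))]
    exact exp_neg_sq_sub_mul_rpow_le_exp y hp1 (le_of_lt hx)

lemma norm_setIntegral_exp_neg_sq_sub_mul_rpow_le (hp : 0 < p) (hp1 : p ≤ 1) (y : ℝ) :
    ‖∫ x in Ioi 0, exp (-(x - y) ^ 2) * x ^ (p - 1)‖ ≤ 1 / p + √π := by
  have hint := integrableOn_exp_neg_sq_sub_mul_rpow hp hp1 y
  rw [norm_of_nonneg (setIntegral_nonneg measurableSet_Ioi fun x hx =>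
      exp_neg_sq_sub_mul_rpow_nonneg y (le_of_lt hx)),
    ← intervalIntegral.integral_interval_add_Ioi hint
      (hint.mono_set (Ioi_subset_Ioi zero_le_one))]
  gcongr
  · calc (∫ x in (0 : ℝ)..1, exp (-(x - y) ^ 2) * x ^ (p - 1))
        ≤ ∫ x in (0 : ℝ)..1, x ^ (p - 1) :=
          intervalIntegral.integral_mono_on zero_le_one
            ((intervalIntegrable_iff_integrableOn_Ioc_of_le zero_le_one).2
              (hint.mono_set Ioc_subset_Ioi_self))
            (intervalIntegral.intervalIntegrable_rpow' (by linarith)) fun x hx =>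
              exp_neg_sq_sub_mul_rpow_le_rpow y hx.1
      _ = 1 / p := by
          rw [integral_rpow (Or.inl (by linarith)), sub_add_cancel, one_rpow,
            zero_rpow hp.ne', sub_zero]
  · calc (∫ x in Ioi 1, exp (-(x - y) ^ 2) * x ^ (p - 1))
        ≤ ∫ x in Ioi 1, exp (-(x - y) ^ 2) :=
          setIntegral_mono_on (hint.mono_set (Ioi_subset_Ioi zero_le_one))
            (integrable_exp_neg_sq_sub y).integrableOn measurableSet_Ioi fun x hx =>
              exp_neg_sq_sub_mul_rpow_le_exp y hp1 (le_of_lt hx)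
      _ ≤ ∫ x, exp (-(x - y) ^ 2) :=
          setIntegral_le_integral (integrable_exp_neg_sq_sub y)
            (ae_of_all _ fun _ => (exp_pos _).le)
      _ = √π := integral_exp_neg_sq_sub y

lemma measurable_setIntegral_exp_neg_sq_sub_mul_rpow (p : ℝ) :
    Measurable fun y : ℝ => ∫ x in Ioi 0, exp (-(x - y) ^ 2) * x ^ (p - 1) :=
  (StronglyMeasurable.integral_prod_right (f := fun y x : ℝ => exp (-(x - y) ^ 2) * x ^ (p - 1))
    (by fun_prop)).measurable

lemma tendsto_mul_exp_neg_sq_half :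
    Tendsto (fun y : ℝ => y * exp (-(y / 2) ^ 2)) atTop (𝓝 0) := by
  have hlim : Tendsto (fun y : ℝ => exp (-(1 / 2) * y)) atTop (𝓝 0) :=
    tendsto_exp_atBot.comp (tendsto_id.const_mul_atTop_of_neg (by norm_num))
  refine ((rpow_mul_exp_neg_mul_sq_isLittleO_exp_neg (by norm_num : (0 : ℝ) < 1 / 4)
    1).trans_tendsto hlim).congr fun y => ?_
  rw [rpow_one]
  ring_nf

lemma tendsto_rpow_one_sub_mul_integral_zero_half (hp : 0 < p) (hp1 : p ≤ 1) :
    Tendsto (fun y => y ^ (1 - p) * ∫ x in (0 : ℝ)..y / 2, exp (-(x - y) ^ 2) * x ^ (p - 1))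
      atTop (𝓝 0) := by
  have hbound : ∀ y : ℝ, 0 < y →
      (∫ x in (0 : ℝ)..y / 2, exp (-(x - y) ^ 2) * x ^ (p - 1)) ≤
        exp (-(y / 2) ^ 2) * ((y / 2) ^ p / p) := by
    intro y hy
    have hrpow : IntervalIntegrable (fun x : ℝ => x ^ (p - 1)) volume 0 (y / 2) :=
      intervalIntegral.intervalIntegrable_rpow' (by linarith)
    calc (∫ x in (0 : ℝ)..y / 2, exp (-(x - y) ^ 2) * x ^ (p - 1))
        ≤ ∫ x in (0 : ℝ)..y / 2, exp (-(y / 2) ^ 2) * x ^ (p - 1) := by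
          refine intervalIntegral.integral_mono_on (by positivity) ?_ (hrpow.const_mul _)
            fun x hx => ?_
          · exact (intervalIntegrable_iff_integrableOn_Ioc_of_le (by positivity)).2
              ((integrableOn_exp_neg_sq_sub_mul_rpow hp hp1 y).mono_set Ioc_subset_Ioi_self)
          · exact mul_le_mul_of_nonneg_right (exp_le_exp.2 (by nlinarith [hx.1, hx.2]))
              (rpow_nonneg hx.1 _)
      _ = exp (-(y / 2) ^ 2) * ((y / 2) ^ p / p) := by
          rw [intervalIntegral.integral_const_mul, integral_rpow (Or.inl (by linarith)),
            sub_add_cancel, zero_rpow hp.ne', sub_zero]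
  refine squeeze_zero' ?_ ?_ (by simpa only [mul_zero] using
    tendsto_mul_exp_neg_sq_half.const_mul (2 ^ (-p) / p))
  · filter_upwards [eventually_gt_atTop 0] with y hy
    exact mul_nonneg (rpow_nonneg hy.le _) (intervalIntegral.integral_nonneg (by positivity)
      fun x hx => exp_neg_sq_sub_mul_rpow_nonneg y hx.1)
  · filter_upwards [eventually_gt_atTop 0] with y hy
    calc y ^ (1 - p) * ∫ x in (0 : ℝ)..y / 2, exp (-(x - y) ^ 2) * x ^ (p - 1)
        ≤ y ^ (1 - p) * (exp (-(y / 2) ^ 2) * ((y / 2) ^ p / p)) := by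
          gcongr
          exact hbound y hy
      _ = 2 ^ (-p) / p * (y * exp (-(y / 2) ^ 2)) := by
          rw [div_rpow hy.le zero_le_two, rpow_neg zero_le_two]
          have : y ^ (1 - p) * y ^ p = y := by rw [← rpow_add hy, sub_add_cancel, rpow_one]
          calc y ^ (1 - p) * (exp (-(y / 2) ^ 2) * (y ^ p * (2 ^ p)⁻¹ / p))
              = (2 ^ p)⁻¹ / p * (y ^ (1 - p) * y ^ p * exp (-(y / 2) ^ 2)) := by ring
            _ = _ := by rw [this]

lemma rpow_one_sub_mul_integral_Ioi_half_eq {y : ℝ} (hy : 0 < y) :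
    y ^ (1 - p) * ∫ x in Ioi (y / 2), exp (-(x - y) ^ 2) * x ^ (p - 1) =
      ∫ t, (Ioi (-(y / 2))).indicator (fun t => exp (-t ^ 2) * ((t + y) / y) ^ (p - 1)) t := by
  rw [← integral_indicator measurableSet_Ioi, ← integral_add_right_eq_self _ y,
    ← integral_const_mul]
  congr 1 with t
  by_cases ht : -(y / 2) < t
  · have hty : 0 < t + y := by linarith
    rw [indicator_of_mem (show t + y ∈ Ioi (y / 2) by simp only [mem_Ioi]; linarith),
      indicator_of_mem (show t ∈ Ioi (-(y / 2)) from ht), div_rpow hty.le hy.le,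
      add_sub_cancel_right, div_eq_mul_inv, ← rpow_neg hy.le, neg_sub]
    ring
  · rw [indicator_of_notMem (show t + y ∉ Ioi (y / 2) by simp only [mem_Ioi]; linarith),
      indicator_of_notMem (show t ∉ Ioi (-(y / 2)) from ht), mul_zero]

lemma tendsto_integral_indicator_exp_neg_sq_mul_rpow (hp1 : p ≤ 1) :
    Tendsto (fun y : ℝ =>
      ∫ t, (Ioi (-(y / 2))).indicator (fun t => exp (-t ^ 2) * ((t + y) / y) ^ (p - 1)) t)
      atTop (𝓝 √π) := by
  rw [← integral_exp_neg_sq_sub 0]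
  refine tendsto_integral_filter_of_dominated_convergence
    (fun t => (1 / 2) ^ (p - 1) * exp (-t ^ 2)) ?_ ?_ ?_ ?_
  · exact Eventually.of_forall fun y =>
      ((by fun_prop : Measurable fun t : ℝ => exp (-t ^ 2) * ((t + y) / y) ^ (p - 1)).indicator
        measurableSet_Ioi).aestronglyMeasurable
  · filter_upwards [eventually_gt_atTop 0] with y hy
    refine ae_of_all _ fun t => ?_
    by_cases ht : -(y / 2) < t
    · have hhalf : 1 / 2 ≤ (t + y) / y := by rw [le_div_iff₀ hy]; linarith
      have hty : 0 < (t + y) / y := by linarith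
      rw [indicator_of_mem (show t ∈ Ioi (-(y / 2)) from ht), norm_of_nonneg (by positivity),
        mul_comm]
      exact mul_le_mul_of_nonneg_right (rpow_le_rpow_of_nonpos (by norm_num) hhalf (by linarith))
        (exp_pos _).le
    · rw [indicator_of_notMem (show t ∉ Ioi (-(y / 2)) from ht), norm_zero]
      positivity
  · simpa using (integrable_exp_neg_sq_sub 0).const_mul ((1 / 2) ^ (p - 1))
  · refine ae_of_all _ fun t => ?_
    have hquot : Tendsto (fun y => (t + y) / y) atTop (𝓝 1) := by
      have := (tendsto_inv_atTop_zero.const_mul t).add_const 1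
      rw [mul_zero, zero_add] at this
      refine this.congr' ?_
      filter_upwards [eventually_gt_atTop 0] with y hy
      field_simp
    have hlim := ((continuousAt_rpow_const 1 (p - 1) (Or.inl one_ne_zero)).tendsto.comp
      hquot).const_mul (exp (-t ^ 2))
    rw [one_rpow, mul_one, ← sub_zero t] at hlim
    refine hlim.congr' ?_
    filter_upwards [eventually_gt_atTop (-2 * t)] with y hy
    rw [indicator_of_mem (show t ∈ Ioi (-(y / 2)) by simp only [mem_Ioi]; linarith)]
    simp

lemma tendsto_rpow_one_sub_mul_setIntegral_exp_neg_sq_sub_mul_rpow (hp : 0 < p) (hp1 : p ≤ 1) :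
    Tendsto (fun y => y ^ (1 - p) * ∫ x in Ioi 0, exp (-(x - y) ^ 2) * x ^ (p - 1))
      atTop (𝓝 √π) := by
  have hsum := (tendsto_rpow_one_sub_mul_integral_zero_half hp hp1).add
    (tendsto_integral_indicator_exp_neg_sq_mul_rpow hp1)
  rw [zero_add] at hsum
  refine hsum.congr' ?_
  filter_upwards [eventually_gt_atTop 0] with y hy
  have hint := integrableOn_exp_neg_sq_sub_mul_rpow hp hp1 y
  rw [← rpow_one_sub_mul_integral_Ioi_half_eq hy, ← mul_add,
    intervalIntegral.integral_interval_add_Ioi hint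
      (hint.mono_set (Ioi_subset_Ioi (by positivity)))]

theorem h_minus_asymptotics_general (p : ℝ) (hp : 0 < p) (hp1 : p < 1) (n : ℕ)
    (h : ℝ → ℝ)
    (hh : ∀ y, h y = p * ∫ x in Set.Ioi (0:ℝ), Real.exp (-(x - y)^2) * x ^ (p - 1)) :
    Tendsto (fun y => y ^ (1 - p) * h y) atTop (nhds (p * Real.sqrt π)) ∧
    ((n : ℝ) * p < (n : ℝ) - 1 →
      IntegrableOn (fun y => (h y)^n) (Set.Ioi (0:ℝ))) := by
  have hlim : Tendsto (fun y => y ^ (1 - p) * h y) atTop (𝓝 (p * √π)) :=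
    ((tendsto_rpow_one_sub_mul_setIntegral_exp_neg_sq_sub_mul_rpow hp hp1.le).const_mul p).congr
      fun y => by rw [hh]; ring
  refine ⟨hlim, fun hnp => ?_⟩
  have hmeas : Measurable h := by
    rw [funext hh]
    exact (measurable_setIntegral_exp_neg_sq_sub_mul_rpow p).const_mul p
  have hbound (y : ℝ) : ‖h y ^ n‖ ≤ (p * (1 / p + √π)) ^ n := by
    rw [norm_pow, hh, norm_mul, norm_of_nonneg hp.le]
    gcongr
    exact norm_setIntegral_exp_neg_sq_sub_mul_rpow_le hp hp1.le y
  have hO : (fun y => h y ^ n) =O[atTop] fun y => y ^ (-(1 - p) * n) :=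
    ((isBigO_rpow_neg_of_tendsto_rpow_mul hlim).pow n).congr' .rfl <|
      (eventually_ge_atTop 0).mono fun y hy => (rpow_mul_natCast hy _ n).symm
  exact (integrableOn_Ici_of_isBigO_rpow (hmeas.pow_const n).aestronglyMeasurable hbound hO
    (by nlinarith)).mono_set Ioi_subset_Ici_self

theorem h_minus_asymptotics (p : ℝ) (hp : 0 < p) (hp1 : p < 1) (n : ℕ) (hn : 2 ≤ n)
    (h : ℝ → ℝ)
    (hh : ∀ y, h y = p * ∫ x in Set.Ioi (0:ℝ), Real.exp (-(x - y)^2) * x ^ (p - 1)) :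
    Tendsto (fun y => y ^ (1 - p) * h y) atTop (nhds (p * Real.sqrt π)) ∧
    ((n : ℝ) * p < (n : ℝ) - 1 →
      IntegrableOn (fun y => (h y)^n) (Set.Ioi (0:ℝ))) :=
  h_minus_asymptotics_general p hp hp1 n h hh
end

section
/- Let f be a probability density on (0,1) with f ∈ L^p(0,1) for some p > 1 such that n(1 - 1/p) > 1. Let Q = ∑_{i=1}^n (Xᵢ - X̄)² for an i.i.d. sample X₁,…,Xₙ with density f. Then the Laplace transform f*_Q(t) = E[exp(-tQ)] satisfies f*_Q(t) = O(t^{-δ_p}) as t → ∞, where δ_p = (n(1-1/p) - 1)/2. -/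
/-!
Since `∑ i, (x i - x 0) ^ 2 ≤ 2 (n + 1) Q(x)`, the weight `exp (-t Q)` is dominated by
`∏_{j ≠ 0} exp (-s (x j - x 0) ^ 2)` with `s = t / (2 (n + 1))`. Conditioning on `X₀`, the remaining
`n - 1` factors are independent, and Hölder's inequality bounds each of their expectations,
uniformly in `X₀`, by `‖f‖_p ‖exp (-s (· - c) ^ 2)‖_q = O(s ^ (-1 / (2q)))`. Hence
`E[exp (-t Q)] = O(t ^ (-(n - 1) / (2q)))`, which is at least as strong as the claim since
`(n - 1) / q ≥ n / q - 1`.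
-/

open MeasureTheory ProbabilityTheory Filter Real

lemma sum_sq_sub_le_mul_sum_sq_sub {ι : Type*} [Fintype ι] (x : ι → ℝ) (k : ι) (c : ℝ) :
    ∑ i, (x i - x k) ^ 2 ≤ 2 * (Fintype.card ι + 1) * ∑ i, (x i - c) ^ 2 := by
  have hk : (x k - c) ^ 2 ≤ ∑ i, (x i - c) ^ 2 :=
    Finset.single_le_sum (f := fun i => (x i - c) ^ 2) (fun i _ => sq_nonneg _)
      (Finset.mem_univ k)
  calc ∑ i, (x i - x k) ^ 2 ≤ ∑ i, (2 * (x i - c) ^ 2 + 2 * (x k - c) ^ 2) :=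
        Finset.sum_le_sum fun i _ => by nlinarith [sq_nonneg (x i + x k - 2 * c)]
    _ = 2 * ∑ i, (x i - c) ^ 2 + Fintype.card ι * (2 * (x k - c) ^ 2) := by
        rw [Finset.sum_add_distrib, Finset.sum_const, ← Finset.mul_sum, nsmul_eq_mul,
          Finset.card_univ]
    _ ≤ 2 * (Fintype.card ι + 1) * ∑ i, (x i - c) ^ 2 := by
        nlinarith [mul_le_mul_of_nonneg_left hk (Nat.cast_nonneg (Fintype.card ι) : (0:ℝ) ≤ _)]

lemma sqrt_div_rpow {A t : ℝ} (ht : 0 < t) (r : ℝ) :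
    √(A / t) ^ r = √A ^ r * t ^ (-(r / 2)) := by
  rw [sqrt_div' _ ht.le, div_rpow (sqrt_nonneg _) (sqrt_nonneg _), sqrt_eq_rpow t,
    ← rpow_mul ht.le, rpow_neg ht.le, div_eq_mul_inv]
  ring_nf

lemma isBigO_rpow_rpow_atTop_of_le {a b : ℝ} (hab : a ≤ b) :
    (fun t : ℝ => t ^ a) =O[atTop] fun t => t ^ b := by
  refine Asymptotics.IsBigO.of_bound' ?_
  filter_upwards [eventually_ge_atTop 1] with t ht
  rw [norm_of_nonneg (rpow_nonneg (by linarith) _), norm_of_nonneg (rpow_nonneg (by linarith) _)]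
  exact rpow_le_rpow_of_exponent_le ht hab

lemma integrable_exp_neg_mul_sq_sub {s : ℝ} (hs : 0 < s) (c : ℝ) :
    Integrable fun u : ℝ => exp (-(s * (u - c) ^ 2)) := by
  simpa [neg_mul] using (integrable_exp_neg_mul_sq hs).comp_sub_right c

lemma integral_exp_neg_mul_sq_sub {s : ℝ} (c : ℝ) :
    ∫ u : ℝ, exp (-(s * (u - c) ^ 2)) = √(π / s) := by
  simpa [neg_mul] using
    (integral_sub_right_eq_self (fun u : ℝ => exp (-s * u ^ 2)) c).trans (integral_gaussian s)

lemma setIntegral_mul_exp_neg_mul_sq_sub_le {p q : ℝ} (hpq : p.HolderConjugate q) {S : Set ℝ}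
    {f : ℝ → ℝ} (hf : ∀ x, 0 ≤ f x) (hfp : MemLp f (ENNReal.ofReal p) (volume.restrict S))
    {s : ℝ} (hs : 0 < s) (c : ℝ) :
    ∫ u in S, f u * exp (-(s * (u - c) ^ 2)) ≤
      (∫ u in S, f u ^ p) ^ (1 / p) * √(π / (s * q)) ^ (1 / q) := by
  have hq : 0 < q := hpq.symm.pos
  have hpow : ∀ u, exp (-(s * (u - c) ^ 2)) ^ q = exp (-(s * q * (u - c) ^ 2)) := fun u => by
    rw [← exp_mul]; ring_nf
  have hg : MemLp (fun u => exp (-(s * (u - c) ^ 2))) (ENNReal.ofReal q) volume := by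
    refine (integrable_norm_rpow_iff (by fun_prop) (by simpa using hq)
      ENNReal.ofReal_ne_top).1 ?_
    simpa [ENNReal.toReal_ofReal hq.le, Real.norm_of_nonneg (exp_pos _).le, hpow]
      using integrable_exp_neg_mul_sq_sub (mul_pos hs hq) c
  refine (integral_mul_le_Lp_mul_Lq_of_nonneg hpq (Eventually.of_forall hf)
    (Eventually.of_forall fun u => (exp_pos _).le) hfp (hg.restrict S)).trans ?_
  gcongr
  · exact rpow_nonneg (integral_nonneg fun u => rpow_nonneg (hf u) p) _
  · simp_rw [hpow, ← integral_exp_neg_mul_sq_sub c]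
    exact setIntegral_le_integral (integrable_exp_neg_mul_sq_sub (mul_pos hs hq) c)
      (Eventually.of_forall fun u => (exp_pos _).le)

lemma integral_withDensity_ofReal {α : Type*} [MeasurableSpace α] {μ : Measure α} {f : α → ℝ}
    (hf : ∀ x, 0 ≤ f x) (hf_meas : AEMeasurable f μ) (g : α → ℝ) :
    ∫ x, g x ∂μ.withDensity (fun x => ENNReal.ofReal (f x)) = ∫ x, f x * g x ∂μ := by
  rw [integral_withDensity_eq_integral_toReal_smul₀ hf_meas.ennreal_ofReal
    (Eventually.of_forall fun _ => ENNReal.ofReal_lt_top)]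
  simp [ENNReal.toReal_ofReal (hf _)]

lemma integral_pi_prod_fin_succ_le {α : Type*} [MeasurableSpace α] (ν : Measure α)
    [IsProbabilityMeasure ν] {m : ℕ} {h : α → α → ℝ} (h_meas : Measurable (Function.uncurry h))
    (h_nonneg : ∀ c u, 0 ≤ h c u) (h_le_one : ∀ c u, h c u ≤ 1) {B : ℝ}
    (hB : ∀ c, ∫ u, h c u ∂ν ≤ B) :
    ∫ x : Fin (m + 1) → α, ∏ j : Fin m, h (x 0) (x j.succ) ∂Measure.pi (fun _ => ν) ≤ B ^ m := by
  have h_int : Integrable (fun z : α × (Fin m → α) => ∏ j, h z.1 (z.2 j))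
      (ν.prod (Measure.pi fun _ => ν)) := by
    refine Integrable.of_bound (Finset.measurable_prod _ fun j _ => h_meas.comp
      (measurable_fst.prodMk ((measurable_pi_apply j).comp measurable_snd))).aestronglyMeasurable
      1 (Eventually.of_forall fun z => ?_)
    rw [Real.norm_of_nonneg (Finset.prod_nonneg fun j _ => h_nonneg _ _)]
    exact Finset.prod_le_one (fun j _ => h_nonneg _ _) fun j _ => h_le_one _ _
  rw [← (measurePreserving_piFinSuccAbove (fun _ : Fin (m + 1) => ν) 0).symm.integral_comp']
  calc ∫ z : α × (Fin m → α), ∏ j : Fin m, h (z.1) (z.2 j) ∂(ν.prod (Measure.pi fun _ => ν))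
      = ∫ c, (∫ u, h c u ∂ν) ^ m ∂ν := by
        rw [integral_prod _ h_int]
        refine integral_congr_ae (Eventually.of_forall fun c => ?_)
        simpa using integral_fintype_prod_eq_pow (h c) (μ := ν) (ι := Fin m)
    _ ≤ ∫ _, B ^ m ∂ν := by
        refine integral_mono_of_nonneg (Eventually.of_forall fun c => ?_) (integrable_const _)
          (Eventually.of_forall fun c => ?_)
        · exact pow_nonneg (integral_nonneg (h_nonneg c)) m
        · exact pow_le_pow_left₀ (integral_nonneg (h_nonneg c)) (hB c) m
    _ = B ^ m := by simp

lemma exp_neg_mul_sum_sq_sub_mean_le {m : ℕ} (x : Fin (m + 1) → ℝ) {t : ℝ} (ht : 0 ≤ t) :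
    exp (-t * ∑ i, (x i - (∑ j, x j) / ((m + 1 : ℕ) : ℝ)) ^ 2) ≤
      ∏ j : Fin m, exp (-(t / (2 * (m + 2)) * (x j.succ - x 0) ^ 2)) := by
  rw [← exp_sum, exp_le_exp, Finset.sum_neg_distrib, neg_mul, neg_le_neg_iff, ← Finset.mul_sum]
  have hspread := sum_sq_sub_le_mul_sum_sq_sub x 0 ((∑ j, x j) / ((m + 1 : ℕ) : ℝ))
  rw [Fin.sum_univ_succ, sub_self, Fintype.card_fin] at hspread
  push_cast at hspread ⊢
  rw [div_mul_eq_mul_div, div_le_iff₀ (by positivity)]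
  nlinarith

lemma integral_exp_neg_mul_sum_sq_sub_mean_le (ν : Measure ℝ) [IsProbabilityMeasure ν] {m : ℕ}
    {t : ℝ} (ht : 0 ≤ t) {B : ℝ}
    (hB : ∀ c, ∫ u, exp (-(t / (2 * (m + 2)) * (u - c) ^ 2)) ∂ν ≤ B) :
    ∫ x : Fin (m + 1) → ℝ, exp (-t * ∑ i, (x i - (∑ j, x j) / ((m + 1 : ℕ) : ℝ)) ^ 2)
      ∂Measure.pi (fun _ => ν) ≤ B ^ m := by
  refine (integral_mono_of_nonneg (Eventually.of_forall fun x => (exp_pos _).le) ?_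
    (Eventually.of_forall fun x => exp_neg_mul_sum_sq_sub_mean_le x ht)).trans ?_
  · exact Integrable.of_bound (by fun_prop) 1 (Eventually.of_forall fun x => by
      rw [Real.norm_of_nonneg (Finset.prod_nonneg fun j _ => (exp_pos _).le)]
      exact Finset.prod_le_one (fun j _ => (exp_pos _).le) fun j _ =>
        exp_le_one_iff.2 (neg_nonpos.2 (by positivity)))
  · exact integral_pi_prod_fin_succ_le ν
      (h := fun c u => exp (-(t / (2 * (m + 2)) * (u - c) ^ 2))) (by fun_prop)
      (fun _ _ => (exp_pos _).le) (fun _ _ => exp_le_one_iff.2 (neg_nonpos.2 (by positivity))) hB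

lemma integral_pi_exp_neg_mul_sum_sq_sub_mean_le_of_memLp {p q : ℝ} (hpq : p.HolderConjugate q)
    {S : Set ℝ} {f : ℝ → ℝ} (hf : ∀ x, 0 ≤ f x)
    (hfp : MemLp f (ENNReal.ofReal p) (volume.restrict S))
    [IsProbabilityMeasure ((volume.restrict S).withDensity fun x => ENNReal.ofReal (f x))]
    (m : ℕ) {t : ℝ} (ht : 0 < t) :
    ∫ x : Fin (m + 1) → ℝ, exp (-t * ∑ i, (x i - (∑ j, x j) / ((m + 1 : ℕ) : ℝ)) ^ 2)
        ∂Measure.pi (fun _ => (volume.restrict S).withDensity fun x => ENNReal.ofReal (f x)) ≤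
      ((∫ u in S, f u ^ p) ^ (1 / p) * √(2 * (m + 2) * π / q) ^ (1 / q)) ^ m *
        t ^ (-(m / (2 * q))) := by
  calc _ ≤ ((∫ u in S, f u ^ p) ^ (1 / p) * √(π / (t / (2 * (m + 2)) * q)) ^ (1 / q)) ^ m :=
        integral_exp_neg_mul_sum_sq_sub_mean_le _ ht.le fun c => by
          rw [integral_withDensity_ofReal hf hfp.aestronglyMeasurable.aemeasurable]
          exact setIntegral_mul_exp_neg_mul_sq_sub_le hpq hf hfp (by positivity) c
    _ = _ := by
        rw [show π / (t / (2 * (m + 2)) * q) = 2 * (m + 2) * π / q / t by field_simp,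
          sqrt_div_rpow ht, ← mul_assoc, mul_pow, ← rpow_natCast (t ^ _), ← rpow_mul ht.le]
        congr 2
        ring

theorem laplace_transform_sample_variance_bigO_general
    {Ω : Type*} [MeasurableSpace Ω] (μ : Measure Ω) [IsProbabilityMeasure μ]
    (n : ℕ) (hn : 2 ≤ n) (p : ℝ) (hp : 1 < p)
    (f : ℝ → ℝ) (hfnn : ∀ x, 0 ≤ f x)
    (hfLp : MemLp f (ENNReal.ofReal p) (volume.restrict (Set.Ioo (0:ℝ) 1)))
    (X : Fin n → Ω → ℝ) (hXm : ∀ i, Measurable (X i))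
    (hindep : iIndepFun X μ)
    (hlaw : ∀ i, Measure.map (X i) μ =
      (volume.restrict (Set.Ioo (0:ℝ) 1)).withDensity (fun x => ENNReal.ofReal (f x)))
    (Q : Ω → ℝ) (hQ : ∀ ω, Q ω = ∑ i, (X i ω - (∑ j, X j ω) / n)^2) :
    (fun t : ℝ => ∫ ω, Real.exp (-t * Q ω) ∂μ) =O[atTop]
      (fun t : ℝ => t ^ (-(((n : ℝ) * (1 - 1/p) - 1) / 2))) := by
  obtain ⟨m, rfl⟩ : ∃ m, n = m + 1 := ⟨n - 1, by omega⟩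
  have hpq : p.HolderConjugate p.conjExponent := .conjExponent hp
  set ν := (volume.restrict (Set.Ioo (0:ℝ) 1)).withDensity (fun x => ENNReal.ofReal (f x))
  have : IsProbabilityMeasure ν := hlaw 0 ▸ Measure.isProbabilityMeasure_map (hXm 0).aemeasurable
  have hsample : μ.map (fun ω i => X i ω) = Measure.pi fun _ => ν := by
    rw [hindep.map_fun_eq_pi_map fun i => (hXm i).aemeasurable]
    simp_rw [hlaw]
  obtain ⟨C, hC⟩ : ∃ C, ∀ t > 0, ∫ ω, exp (-t * Q ω) ∂μ ≤ C * t ^ (-(m / (2 * p.conjExponent))) :=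
    ⟨_, fun t ht =>
      (integral_pi_exp_neg_mul_sum_sq_sub_mean_le_of_memLp hpq hfnn hfLp m ht).trans_eq' <| by
      rw [← hsample, integral_map (aemeasurable_pi_lambda _ fun i => (hXm i).aemeasurable)
        (by fun_prop)]
      simp_rw [hQ]⟩
  have hdecay : (fun t : ℝ => ∫ ω, exp (-t * Q ω) ∂μ) =O[atTop]
      fun t => t ^ (-(m / (2 * p.conjExponent))) := by
    refine (Asymptotics.IsBigO.of_norm_eventuallyLE ?_).trans
      (Asymptotics.isBigO_const_mul_self C _ _)
    filter_upwards [eventually_gt_atTop 0] with t ht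
    rw [norm_of_nonneg (integral_nonneg fun _ => (exp_pos _).le)]
    exact hC t ht
  refine hdecay.trans (isBigO_rpow_rpow_atTop_of_le ?_)
  rw [one_div, hpq.one_sub_inv]
  push_cast
  rw [show (m : ℝ) / (2 * p.conjExponent) = m * p.conjExponent⁻¹ / 2 by ring]
  linarith [inv_le_one_of_one_le₀ hpq.symm.lt.le]

theorem laplace_transform_sample_variance_bigO
    {Ω : Type*} [MeasurableSpace Ω] (μ : Measure Ω) [IsProbabilityMeasure μ]
    (n : ℕ) (hn : 2 ≤ n) (p : ℝ) (hp : 1 < p)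
    (hnp : (n : ℝ) * (1 - 1/p) > 1)
    (f : ℝ → ℝ) (hfnn : ∀ x, 0 ≤ f x)
    (hfLp : MemLp f (ENNReal.ofReal p) (volume.restrict (Set.Ioo (0:ℝ) 1)))
    (X : Fin n → Ω → ℝ) (hXm : ∀ i, Measurable (X i))
    (hindep : iIndepFun X μ)
    (hlaw : ∀ i, Measure.map (X i) μ =
      (volume.restrict (Set.Ioo (0:ℝ) 1)).withDensity (fun x => ENNReal.ofReal (f x)))
    (Q : Ω → ℝ) (hQ : ∀ ω, Q ω = ∑ i, (X i ω - (∑ j, X j ω) / n)^2) :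
    (fun t : ℝ => ∫ ω, Real.exp (-t * Q ω) ∂μ) =O[atTop]
      (fun t : ℝ => t ^ (-(((n : ℝ) * (1 - 1/p) - 1) / 2))) :=
  laplace_transform_sample_variance_bigO_general μ n hn p hp f hfnn hfLp X hXm hindep hlaw Q hQ
end

section
/- Let X₁,…,Xₙ be i.i.d. random variables with values in [0,1] and let Q = ∑(Xᵢ - X̄)². Then the characteristic function of Q satisfies f̂_Q(t) = √(n/π) ∫_{-∞}^∞ (ψ(t,y))ⁿ dy, where ψ(t,y) = E[exp(-(y + √(-it) X)²)] and √(-it) is the principal square root. -/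
/-!
Completing the square, `exp w² = π^{-1/2} ∫ exp(-y² - 2wy) dy` (Hubbard–Stratonovich) with
`w = √(-it/n) ∑ Xⱼ` linearises the quadratic form `Q = ∑ Xⱼ² - (∑ Xⱼ)² / n`: after scaling `y` by
`√n`, `exp(itQ)` is a multiple of `∫ ∏ⱼ exp(-(y + √(-it) Xⱼ)²) dy`. Since the `Xⱼ` are bounded,
the integrand is dominated by a Gaussian in `y`, so the expectation can be taken inside the
`y`-integral, where independence and identical distribution turn it into `ψ(t, y)ⁿ`.
-/

open MeasureTheory ProbabilityTheory Complex

lemma Finset.sum_sub_mean_sq {ι K : Type*} [Field K] (s : Finset ι) (f : ι → K) :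
    ∑ i ∈ s, (f i - (∑ j ∈ s, f j) / s.card) ^ 2
      = ∑ i ∈ s, f i ^ 2 - (∑ i ∈ s, f i) ^ 2 / s.card := by
  have expand : ∀ m : K, ∑ i ∈ s, (f i - m) ^ 2
      = ∑ i ∈ s, f i ^ 2 - 2 * m * ∑ i ∈ s, f i + s.card * m ^ 2 := by
    intro m
    simp only [sub_sq, Finset.sum_add_distrib, Finset.sum_sub_distrib, Finset.mul_sum,
      Finset.sum_const, nsmul_eq_mul, mul_right_comm _ (f _)]
  rw [expand]
  rcases eq_or_ne (s.card : K) 0 with hcard | hcard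
  · simp [hcard]
  · field_simp
    ring

lemma norm_cexp_neg_sq_add_mul_le (a : ℂ) (x y : ℝ) :
    ‖cexp (-(y + a * x) ^ 2)‖ ≤ Real.exp (‖a‖ ^ 2 * x ^ 2 - y ^ 2 / 2) := by
  rw [norm_exp, Real.exp_le_exp, Complex.sq_norm, Complex.normSq_apply]
  simp only [neg_re, sq, add_re, mul_re, ofReal_re, ofReal_im, add_im, mul_im]
  nlinarith [sq_nonneg (y + 2 * (a.re * x))]

lemma integral_prod_cexp_neg_sq_add_mul {ι : Type*} [Fintype ι] [Nonempty ι] (a : ℂ) (x : ι → ℝ) :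
    ∫ y : ℝ, ∏ i, cexp (-(y + a * x i) ^ 2)
      = (Real.pi / Fintype.card ι) ^ (1 / 2 : ℂ)
        * cexp (-a ^ 2 * ∑ i, (x i - (∑ j, x j) / Fintype.card ι) ^ 2) := by
  set N : ℂ := (Fintype.card ι : ℂ)
  have hN : (-N).re < 0 := by simp [N, Fintype.card_pos]
  have hquad : ∀ y : ℝ, ∏ i, cexp (-(y + a * x i) ^ 2)
      = cexp (-N * y ^ 2 + (-2 * a * ∑ i, (x i : ℂ)) * y + -a ^ 2 * ∑ i, (x i : ℂ) ^ 2) := by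
    intro y
    have hterm : ∀ i, -((y : ℂ) + a * x i) ^ 2
        = -(y : ℂ) ^ 2 + (-2 * a * y) * x i + -a ^ 2 * x i ^ 2 := fun i => by ring
    rw [← exp_sum]
    congr 1
    simp only [hterm, Finset.sum_add_distrib, ← Finset.mul_sum, Finset.sum_const,
      Finset.card_univ, nsmul_eq_mul, N]
    ring
  simp_rw [hquad]
  rw [integral_cexp_quadratic hN, neg_neg]
  congr 2
  push_cast
  have hvar := Finset.sum_sub_mean_sq Finset.univ fun i => (x i : ℂ)
  rw [Finset.card_univ] at hvar
  have hN0 : N ≠ 0 := by simp [N]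
  rw [hvar]
  field_simp
  ring

lemma Complex.ofReal_cpow_one_half {x : ℝ} (hx : 0 ≤ x) :
    (x : ℂ) ^ (1 / 2 : ℂ) = (Real.sqrt x : ℂ) := by
  rw [Real.sqrt_eq_rpow, ofReal_cpow hx]
  push_cast
  rfl

lemma ProbabilityTheory.iIndepFun.integral_prod_comp_eq_pow {Ω 𝓧 𝕜 ι : Type*} [RCLike 𝕜]
    [Fintype ι] {mΩ : MeasurableSpace Ω} {μ : Measure Ω} [MeasurableSpace 𝓧]
    {X : ι → Ω → 𝓧} {Y : Ω → 𝓧} (hX : iIndepFun X μ) (mX : ∀ i, AEMeasurable (X i) μ)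
    (hY : AEMeasurable Y μ) (hident : ∀ i, μ.map (X i) = μ.map Y) {f : 𝓧 → 𝕜}
    (hf : AEStronglyMeasurable f (μ.map Y)) :
    ∫ ω, ∏ i, f (X i ω) ∂μ = (∫ ω, f (Y ω) ∂μ) ^ Fintype.card ι := by
  rw [hX.integral_fun_prod_comp mX fun i => hident i ▸ hf, ← Finset.card_univ,
    ← Finset.prod_const]
  refine Finset.prod_congr rfl fun i _ => ?_
  rw [← integral_map (mX i) (hident i ▸ hf), hident i, integral_map hY hf]

lemma integrable_prod_cexp_neg_sq_add_mul {Ω ι : Type*} [MeasurableSpace Ω] {μ : Measure Ω}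
    [IsFiniteMeasure μ] [Fintype ι] [Nonempty ι] (a : ℂ) {X : ι → Ω → ℝ}
    (hXm : ∀ i, Measurable (X i)) {C : ℝ} (hXb : ∀ i ω, |X i ω| ≤ C) :
    Integrable (fun p : Ω × ℝ => ∏ i, cexp (-(p.2 + a * X i p.1) ^ 2)) (μ.prod volume) := by
  set K := ‖a‖ ^ 2 * C ^ 2
  have hbound : ∀ p : Ω × ℝ, ‖∏ i, cexp (-(p.2 + a * X i p.1) ^ 2)‖
      ≤ Real.exp (Fintype.card ι * K) * Real.exp (-(1 / 2) * p.2 ^ 2) := by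
    intro p
    have hfactor : ∀ i, ‖cexp (-(p.2 + a * X i p.1) ^ 2)‖ ≤ Real.exp (K - p.2 ^ 2 / 2) := by
      intro i
      refine (norm_cexp_neg_sq_add_mul_le a _ _).trans (Real.exp_le_exp.mpr ?_)
      have := sq_le_sq' (abs_le.mp (hXb i p.1)).1 (abs_le.mp (hXb i p.1)).2
      have := sq_nonneg ‖a‖
      nlinarith
    have hcard : (1 : ℝ) ≤ Fintype.card ι := by exact_mod_cast Fintype.card_pos
    calc ‖∏ i, cexp (-(p.2 + a * X i p.1) ^ 2)‖
        ≤ ∏ _i : ι, Real.exp (K - p.2 ^ 2 / 2) := by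
          rw [norm_prod]
          exact Finset.prod_le_prod (fun i _ => norm_nonneg _) fun i _ => hfactor i
      _ = Real.exp (Fintype.card ι * (K - p.2 ^ 2 / 2)) := by
          rw [Finset.prod_const, Finset.card_univ, Real.exp_nat_mul]
      _ ≤ Real.exp (Fintype.card ι * K) * Real.exp (-(1 / 2) * p.2 ^ 2) := by
          rw [← Real.exp_add, Real.exp_le_exp]
          nlinarith [sq_nonneg p.2]
  refine Integrable.mono' ((integrable_const _).mul_prod (integrable_exp_neg_mul_sq one_half_pos))
    (by fun_prop) (ae_of_all _ hbound)

theorem charFun_sample_variance_representation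
    {Ω : Type*} [MeasurableSpace Ω] (μ : Measure Ω) [IsProbabilityMeasure μ]
    (n : ℕ) (hn : 2 ≤ n)
    (X : Fin n → Ω → ℝ) (hXm : ∀ i, Measurable (X i))
    (hXb : ∀ i ω, X i ω ∈ Set.Icc (0:ℝ) 1)
    (hindep : iIndepFun X μ)
    (hident : ∀ i, Measure.map (X i) μ = Measure.map (X ⟨0, by omega⟩) μ)
    (Q : Ω → ℝ) (hQ : ∀ ω, Q ω = ∑ i, (X i ω - (∑ j, X j ω) / n)^2)
    (ψ : ℝ → ℝ → ℂ)
    (hψ : ∀ t y, ψ t y =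
      ∫ ω, Complex.exp (-((y:ℂ) + (-(I * t)) ^ ((1:ℂ)/2) * (X ⟨0, by omega⟩ ω : ℂ))^2) ∂μ) :
    ∀ t : ℝ, ∫ ω, Complex.exp (I * t * (Q ω : ℂ)) ∂μ =
      (Real.sqrt (n / Real.pi) : ℂ) * ∫ y : ℝ, (ψ t y)^n := by
  intro t
  specialize hψ t
  have : Nonempty (Fin n) := ⟨⟨0, by omega⟩⟩
  set a : ℂ := (-(I * t)) ^ ((1:ℂ)/2)
  have ha : a ^ 2 = -(I * t) := by simp only [a, one_div]; exact cpow_ofNat_inv_pow _ 2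
  have hψ_pow : ∀ y : ℝ, ψ t y ^ n = ∫ ω, ∏ i, cexp (-(y + a * X i ω) ^ 2) ∂μ := fun y => by
    rw [hψ, hindep.integral_prod_comp_eq_pow (fun i => (hXm i).aemeasurable) (hXm _).aemeasurable
      hident (f := fun x : ℝ => cexp (-(y + a * x) ^ 2)) (by fun_prop), Fintype.card_fin]
  have hgauss : ∀ ω, ∫ y : ℝ, ∏ i, cexp (-(y + a * X i ω) ^ 2)
      = ((Real.pi : ℂ) / n) ^ (1 / 2 : ℂ) * cexp (I * t * Q ω) := fun ω => by
    rw [integral_prod_cexp_neg_sq_add_mul, ha, neg_neg, hQ, Fintype.card_fin]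
  have hconst : (Real.sqrt (n / Real.pi) : ℂ) * ((Real.pi : ℂ) / n) ^ (1 / 2 : ℂ) = 1 := by
    have hn0 : (n : ℝ) ≠ 0 := by positivity
    rw [← ofReal_natCast, ← ofReal_div, ofReal_cpow_one_half (by positivity), ← ofReal_mul,
      ← Real.sqrt_mul (by positivity), div_mul_div_cancel₀ Real.pi_ne_zero, div_self hn0,
      Real.sqrt_one, ofReal_one]
  have hXabs : ∀ i ω, |X i ω| ≤ 1 := fun i ω =>
    abs_le.mpr ⟨by linarith [(hXb i ω).1], (hXb i ω).2⟩
  calc ∫ ω, cexp (I * t * Q ω) ∂μ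
      = Real.sqrt (n / Real.pi)
          * (((Real.pi : ℂ) / n) ^ (1 / 2 : ℂ) * ∫ ω, cexp (I * t * Q ω) ∂μ) := by
        rw [← mul_assoc, hconst, one_mul]
    _ = Real.sqrt (n / Real.pi) * ∫ ω, (∫ y : ℝ, ∏ i, cexp (-(y + a * X i ω) ^ 2)) ∂μ := by
        rw [← integral_const_mul]
        simp_rw [hgauss]
    _ = Real.sqrt (n / Real.pi) * ∫ y : ℝ, ψ t y ^ n := by
        rw [integral_integral_swap (integrable_prod_cexp_neg_sq_add_mul a hXm hXabs)]
        simp_rw [hψ_pow]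
end

section
/- For p ∈ (0,1), n ≥ 2 with np < n-1, the constant ∫₁^{1/ε - 1} (1+t)^{(p-1)(n-1)} t^{p-1} dt is bounded above by ∫₁^∞ t^{(p-1)n} dt = 1/((1-p)n - 1); more generally, with ε ∈ (0,1/2), P{R ≤ ε} = O(ε^{min(np, n-1)}) as ε → 0 if np ≠ n-1, and O(ε^{n-1} ln(1/ε)) if np = n-1, where R is the range of an i.i.d. sample of size n from the density f_p(x) = p x^{p-1} on (0,1]. -/
/-!
On the event `R ≤ ε` all the `Xᵢ` lie in `[kε, (k + 2)ε]` with `k = ⌊min Xᵢ / ε⌋ ≤ 1/ε`, so by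
independence `P{R ≤ ε} ≤ ∑_{k ≤ 1/ε} (F((k + 2)ε) - F(kε))ⁿ`. Concavity of `x ↦ xᵖ` bounds the
`k`-th increment by `2p kᵖ⁻¹ εᵖ` for `k ≥ 1`, hence `P{R ≤ ε} ≲ ε^{np} (1 + ∑_{k ≤ 1/ε} k^{(p-1)n})`,
and comparing the sum with `∫₁^{1/ε} x^{(p-1)n} dx` gives the three regimes according to the sign
of `(p - 1)n + 1 = n - 1 - np`. The same integral bounds the constant of the first claim, since
`(1 + t)^{(p-1)(n-1)} t^{p-1} ≤ t^{(p-1)n}`.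
-/

open MeasureTheory ProbabilityTheory Filter Real Asymptotics Set Topology

lemma integral_one_rpow_le_of_lt_neg_one {q b : ℝ} (hq : q < -1) (hb : 0 < b) :
    ∫ x in (1:ℝ)..b, x ^ q ≤ -1 / (q + 1) := by
  rw [integral_rpow (Or.inr ⟨by linarith, notMem_uIcc_of_lt one_pos hb⟩), one_rpow]
  exact div_le_div_of_nonpos_of_le (by linarith) (by linarith [rpow_nonneg hb.le (q + 1)])

lemma integral_one_rpow_le_of_neg_one_lt {q : ℝ} (hq : -1 < q) (b : ℝ) :
    ∫ x in (1:ℝ)..b, x ^ q ≤ b ^ (q + 1) / (q + 1) := by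
  rw [integral_rpow (Or.inl hq), one_rpow]
  gcongr <;> linarith

lemma integral_one_rpow_nonneg {b : ℝ} (hb : 1 ≤ b) (q : ℝ) : 0 ≤ ∫ x in (1:ℝ)..b, x ^ q :=
  intervalIntegral.integral_nonneg hb fun x hx => rpow_nonneg (by linarith [hx.1]) q

lemma setIntegral_Icc_one_add_rpow_mul_rpow_le {r s b : ℝ} (hr : r ≤ 0) (hb : 1 ≤ b) :
    ∫ t in Icc 1 b, (1 + t) ^ r * t ^ s ≤ ∫ t in (1:ℝ)..b, t ^ (r + s) := by
  have hcont : ∀ u : ℝ, ContinuousOn (fun t : ℝ => t ^ u) (Icc 1 b) := fun u =>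
    continuousOn_id.rpow_const fun t ht => Or.inl (by linarith [ht.1] : (0:ℝ) < t).ne'
  rw [intervalIntegral.integral_of_le hb, ← integral_Icc_eq_integral_Ioc]
  refine setIntegral_mono_on ?_ (hcont _).integrableOn_Icc measurableSet_Icc fun t ht => ?_
  · refine ContinuousOn.integrableOn_Icc (ContinuousOn.mul ?_ (hcont s))
    exact (continuousOn_const.add continuousOn_id).rpow_const fun t ht =>
      Or.inl (by linarith [ht.1] : (0:ℝ) < 1 + t).ne'
  · have ht : 0 < t := by linarith [ht.1]
    rw [rpow_add ht]
    exact mul_le_mul_of_nonneg_right (rpow_le_rpow_of_nonpos ht (by linarith) hr)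
      (rpow_nonneg ht.le s)

lemma rpow_add_sub_rpow_le {p : ℝ} (hp : 0 ≤ p) (hp1 : p ≤ 1) {x h : ℝ} (hx : 0 < x)
    (hh : 0 ≤ h) : (x + h) ^ p - x ^ p ≤ p * h * x ^ (p - 1) := by
  have hbern :=
    rpow_one_add_le_one_add_mul_self (s := h / x) (by linarith [div_nonneg hh hx.le]) hp hp1
  have hfac : (x + h) ^ p = x ^ p * (1 + h / x) ^ p := by
    rw [← mul_rpow hx.le (by positivity), mul_one_add, mul_div_cancel₀ _ hx.ne']
  rw [hfac, rpow_sub_one hx.ne']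
  have := rpow_nonneg hx.le p
  calc x ^ p * (1 + h / x) ^ p - x ^ p ≤ x ^ p * (1 + p * (h / x)) - x ^ p := by gcongr
    _ = p * h * (x ^ p / x) := by ring

lemma sum_range_rpow_le_one_add_integral {q : ℝ} (hq : q ≤ 0) {K : ℕ} (hK : 1 ≤ K) :
    ∑ j ∈ Finset.range K, ((j:ℝ) + 1) ^ q ≤ 1 + ∫ x in (1:ℝ)..K, x ^ q := by
  obtain ⟨m, rfl⟩ : ∃ m, K = m + 1 := ⟨K - 1, by omega⟩
  have hanti : AntitoneOn (fun x : ℝ => x ^ q) (Icc 1 (1 + m)) := fun x hx y _ hxy =>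
    rpow_le_rpow_of_nonpos (by linarith [hx.1]) hxy hq
  have hsum : ∑ i ∈ Finset.range m, ((i:ℝ) + 1 + 1) ^ q ≤ ∫ x in (1:ℝ)..m + 1, x ^ q := by
    simpa only [Nat.cast_add, Nat.cast_one, add_comm, add_left_comm] using hanti.sum_le_integral
  rw [Finset.sum_range_succ']
  push_cast
  rw [zero_add, one_rpow]
  linarith

lemma sum_rpow_add_two_sub_rpow_pow_le {p : ℝ} (hp : 0 < p) (hp1 : p ≤ 1) (n K : ℕ) :
    ∑ k ∈ Finset.range (K + 1), (((k:ℝ) + 2) ^ p - (k:ℝ) ^ p) ^ n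
      ≤ (2 ^ p) ^ n + (2 * p) ^ n * ∑ j ∈ Finset.range K, ((j:ℝ) + 1) ^ ((p - 1) * n) := by
  rw [Finset.sum_range_succ', Finset.mul_sum, add_comm]
  simp only [Nat.cast_zero, zero_add, zero_rpow hp.ne', sub_zero]
  gcongr with j
  push_cast
  have hj : (0:ℝ) < j + 1 := by positivity
  calc ((j + 1 + 2 : ℝ) ^ p - (j + 1) ^ p) ^ n ≤ (p * 2 * (j + 1) ^ (p - 1)) ^ n :=
        pow_le_pow_left₀ (sub_nonneg.2 (rpow_le_rpow hj.le (by linarith) hp.le))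
          (rpow_add_sub_rpow_le hp.le hp1 hj zero_le_two) n
    _ = (2 * p) ^ n * (j + 1) ^ ((p - 1) * n) := by
        rw [mul_pow, ← rpow_natCast ((j + 1 : ℝ) ^ (p - 1)), ← rpow_mul hj.le, mul_comm p]

lemma sum_rpow_mul_add_two_sub_rpow_mul_pow_le {p : ℝ} (hp : 0 < p) (hp1 : p ≤ 1) (n : ℕ)
    {ε : ℝ} (hε : 0 < ε) (hε1 : ε ≤ 1) :
    ∑ k ∈ Finset.range (⌊1 / ε⌋₊ + 1), ((((k:ℝ) + 2) * ε) ^ p - ((k:ℝ) * ε) ^ p) ^ n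
      ≤ ((2 ^ p) ^ n + (2 * p) ^ n) *
        (ε ^ ((n:ℝ) * p) * (1 + ∫ x in (1:ℝ)..1 / ε, x ^ ((p - 1) * n))) := by
  have hq : (p - 1) * n ≤ 0 := mul_nonpos_of_nonpos_of_nonneg (by linarith) n.cast_nonneg
  have hb : 1 ≤ 1 / ε := one_le_one_div hε hε1
  have hK : 1 ≤ ⌊1 / ε⌋₊ := Nat.le_floor (by exact_mod_cast hb)
  have hscale : ∀ k : ℕ, ((((k:ℝ) + 2) * ε) ^ p - ((k:ℝ) * ε) ^ p) ^ n
      = ε ^ ((n:ℝ) * p) * (((k:ℝ) + 2) ^ p - (k:ℝ) ^ p) ^ n := fun k => by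
    rw [mul_rpow (by positivity) hε.le, mul_rpow k.cast_nonneg hε.le, ← sub_mul, mul_pow,
      ← rpow_natCast (ε ^ p), ← rpow_mul hε.le, mul_comm p, mul_comm]
  have hsum : ∑ j ∈ Finset.range ⌊1 / ε⌋₊, ((j:ℝ) + 1) ^ ((p - 1) * n)
      ≤ 1 + ∫ x in (1:ℝ)..1 / ε, x ^ ((p - 1) * n) := by
    refine (sum_range_rpow_le_one_add_integral hq hK).trans ?_
    gcongr
    refine intervalIntegral.integral_mono_interval le_rfl (by exact_mod_cast hK)
      (Nat.floor_le (by positivity)) ?_ (intervalIntegral.intervalIntegrable_rpow (Or.inr ?_))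
    · filter_upwards [ae_restrict_mem measurableSet_Ioc] with x hx
      exact rpow_nonneg (by linarith [hx.1]) _
    · exact notMem_uIcc_of_lt one_pos (by linarith)
  have hI := integral_one_rpow_nonneg hb ((p - 1) * n)
  rw [Finset.sum_congr rfl fun k _ => hscale k, ← Finset.mul_sum, mul_left_comm]
  gcongr
  calc _ ≤ (2 ^ p) ^ n + (2 * p) ^ n *
          ∑ j ∈ Finset.range ⌊1 / ε⌋₊, ((j:ℝ) + 1) ^ ((p - 1) * n) :=
        sum_rpow_add_two_sub_rpow_pow_le hp hp1 n _
    _ ≤ (2 ^ p) ^ n + (2 * p) ^ n * (1 + ∫ x in (1:ℝ)..1 / ε, x ^ ((p - 1) * n)) := by gcongr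
    _ ≤ _ := by nlinarith [pow_nonneg (rpow_nonneg zero_le_two p) n]

lemma isBigO_rpow_mul_one_add_integral_of_lt_neg_one (a : ℝ) {q : ℝ} (hq : q < -1) :
    (fun ε : ℝ => ε ^ a * (1 + ∫ x in (1:ℝ)..1 / ε, x ^ q)) =O[𝓝[>] 0] fun ε => ε ^ a := by
  have hbdd : (fun ε : ℝ => 1 + ∫ x in (1:ℝ)..1 / ε, x ^ q) =O[𝓝[>] 0] fun _ => (1:ℝ) := by
    refine IsBigO.of_bound (1 - 1 / (q + 1)) ?_
    filter_upwards [Ioo_mem_nhdsGT one_pos] with ε hε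
    have hb : 1 ≤ 1 / ε := one_le_one_div hε.1 hε.2.le
    have hI := integral_one_rpow_le_of_lt_neg_one hq (by linarith : (0:ℝ) < 1 / ε)
    rw [norm_one, mul_one, norm_of_nonneg (by linarith [integral_one_rpow_nonneg hb q]),
      sub_eq_add_neg, ← neg_div]
    linarith
  simpa using (isBigO_refl (fun ε : ℝ => ε ^ a) _).mul hbdd

lemma isBigO_rpow_mul_one_add_integral_of_neg_one_lt (a : ℝ) {q : ℝ} (hq : -1 < q) :
    (fun ε : ℝ => ε ^ a * (1 + ∫ x in (1:ℝ)..1 / ε, x ^ q)) =O[𝓝[>] 0]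
      fun ε => ε ^ (a - (q + 1)) := by
  refine IsBigO.of_bound (1 + 1 / (q + 1)) ?_
  filter_upwards [Ioo_mem_nhdsGT one_pos] with ε ⟨hε0, hε1⟩
  have hb : 1 ≤ 1 / ε := one_le_one_div hε0 hε1.le
  have hpow : ε ^ a * (1 / ε) ^ (q + 1) = ε ^ (a - (q + 1)) := by
    rw [div_rpow zero_le_one hε0.le, one_rpow, rpow_sub hε0, mul_one_div]
  have hmono : ε ^ a ≤ ε ^ (a - (q + 1)) := rpow_le_rpow_of_exponent_ge hε0 hε1.le (by linarith)
  have hI := integral_one_rpow_le_of_neg_one_lt hq (1 / ε)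
  have := integral_one_rpow_nonneg hb q
  rw [norm_of_nonneg (by positivity), norm_of_nonneg (rpow_nonneg hε0.le _)]
  calc ε ^ a * (1 + ∫ x in (1:ℝ)..1 / ε, x ^ q) ≤ ε ^ a * (1 + (1 / ε) ^ (q + 1) / (q + 1)) := by
        gcongr
    _ = ε ^ a + ε ^ (a - (q + 1)) / (q + 1) := by rw [← hpow]; ring
    _ ≤ ε ^ (a - (q + 1)) + ε ^ (a - (q + 1)) / (q + 1) := by linarith
    _ = (1 + 1 / (q + 1)) * ε ^ (a - (q + 1)) := by ring

lemma isBigO_rpow_mul_one_add_integral_inv (a : ℝ) :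
    (fun ε : ℝ => ε ^ a * (1 + ∫ x in (1:ℝ)..1 / ε, x ^ (-1:ℝ))) =O[𝓝[>] 0]
      fun ε => ε ^ a * log (1 / ε) := by
  have hlog : Tendsto (fun ε : ℝ => log (1 / ε)) (𝓝[>] 0) atTop := by
    simpa only [one_div, log_inv] using tendsto_neg_atTop_iff.2 tendsto_log_nhdsGT_zero
  have hint : (fun ε : ℝ => ∫ x in (1:ℝ)..1 / ε, x ^ (-1:ℝ)) =ᶠ[𝓝[>] 0] fun ε => log (1 / ε) := by
    filter_upwards [self_mem_nhdsWithin] with ε (hε : 0 < ε)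
    simp only [rpow_neg_one]
    rw [integral_inv_of_pos one_pos (by positivity), div_one]
  have hone : (fun _ => (1:ℝ)) =O[𝓝[>] 0] fun ε => log (1 / ε) :=
    ((isLittleO_one_left_iff ℝ).2 (tendsto_norm_atTop_atTop.comp hlog)).isBigO
  exact (isBigO_refl _ _).mul (hone.add (hint.trans_isBigO (isBigO_refl _ _)))

noncomputable def powerLaw (p : ℝ) : Measure ℝ :=
  (volume.restrict (Ioc (0:ℝ) 1)).withDensity fun x => ENNReal.ofReal (p * x ^ (p - 1))

lemma ae_mem_Icc_powerLaw (p : ℝ) : ∀ᵐ x ∂powerLaw p, x ∈ Icc (0:ℝ) 1 :=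
  (withDensity_absolutelyContinuous _ _).ae_le <|
    (ae_restrict_mem measurableSet_Ioc).mono fun _ h => Ioc_subset_Icc_self h

lemma powerLaw_Icc_le {p : ℝ} (hp : 0 < p) {a b : ℝ} (ha : 0 ≤ a) (hab : a ≤ b) :
    powerLaw p (Icc a b) ≤ ENNReal.ofReal (b ^ p - a ^ p) := by
  have hint : IntegrableOn (fun x => p * x ^ (p - 1)) (Icc a b) := by
    rw [integrableOn_Icc_iff_integrableOn_Ioc, ← intervalIntegrable_iff_integrableOn_Ioc_of_le hab]
    exact (intervalIntegral.intervalIntegrable_rpow' (by linarith)).const_mul p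
  calc powerLaw p (Icc a b)
      = ∫⁻ x in Icc a b, ENNReal.ofReal (p * x ^ (p - 1)) ∂volume.restrict (Ioc 0 1) :=
        withDensity_apply _ measurableSet_Icc
    _ ≤ ∫⁻ x in Icc a b, ENNReal.ofReal (p * x ^ (p - 1)) :=
        lintegral_mono' (Measure.restrict_mono subset_rfl Measure.restrict_le_self) le_rfl
    _ = ENNReal.ofReal (∫ x in a..b, p * x ^ (p - 1)) := by
        rw [intervalIntegral.integral_of_le hab, ← integral_Icc_eq_integral_Ioc,
          ofReal_integral_eq_lintegral_ofReal hint]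
        filter_upwards [ae_restrict_mem measurableSet_Icc] with x hx
        exact mul_nonneg hp.le (rpow_nonneg (ha.trans hx.1) _)
    _ = ENNReal.ofReal (b ^ p - a ^ p) := by
        rw [intervalIntegral.integral_const_mul, integral_rpow (Or.inl (by linarith)),
          sub_add_cancel, mul_div_cancel₀ _ hp.ne']

lemma ProbabilityTheory.iIndepFun.measure_iInter_preimage_eq_pow {Ω ι β : Type*}
    [MeasurableSpace Ω] [MeasurableSpace β] [Fintype ι] {μ : Measure Ω} {X : ι → Ω → β}
    (hX : ∀ i, Measurable (X i)) (hindep : iIndepFun X μ) {ν : Measure β}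
    (hlaw : ∀ i, μ.map (X i) = ν) {S : Set β} (hS : MeasurableSet S) :
    μ (⋂ i, X i ⁻¹' S) = ν S ^ Fintype.card ι := by
  have := hindep.measure_inter_preimage_eq_mul Finset.univ (sets := fun _ => S) fun _ _ => hS
  simp only [Finset.mem_univ, Set.iInter_true] at this
  rw [this, Finset.prod_congr rfl fun i _ => by rw [← Measure.map_apply (hX i) hS, hlaw i],
    Finset.prod_const, Finset.card_univ]

lemma exists_forall_mem_Icc_of_sup'_sub_inf'_le {ι : Type*} {s : Finset ι} (hs : s.Nonempty)
    {x : ι → ℝ} (hx : ∀ i ∈ s, x i ∈ Icc (0:ℝ) 1) {ε : ℝ} (hε : 0 < ε)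
    (h : s.sup' hs x - s.inf' hs x ≤ ε) :
    ∃ k ≤ ⌊1 / ε⌋₊, ∀ i ∈ s, x i ∈ Icc ((k:ℝ) * ε) (((k:ℝ) + 2) * ε) := by
  obtain ⟨i₀, hi₀, hmin⟩ := Finset.exists_mem_eq_inf' hs x
  have hm := hx i₀ hi₀
  rw [← hmin] at hm
  refine ⟨⌊s.inf' hs x / ε⌋₊, Nat.floor_mono (by gcongr; exact hm.2), fun i hi => ⟨?_, ?_⟩⟩
  · calc (⌊s.inf' hs x / ε⌋₊ : ℝ) * ε ≤ s.inf' hs x / ε * ε := by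
          gcongr; exact Nat.floor_le (div_nonneg hm.1 hε.le)
      _ = s.inf' hs x := div_mul_cancel₀ _ hε.ne'
      _ ≤ x i := Finset.inf'_le x hi
  · have hlt : s.inf' hs x / ε < ⌊s.inf' hs x / ε⌋₊ + 1 := Nat.lt_floor_add_one _
    rw [div_lt_iff₀ hε] at hlt
    linarith [Finset.le_sup' x hi]

lemma toReal_measure_sup'_sub_inf'_le_le {Ω ι : Type*} [MeasurableSpace Ω] [Fintype ι]
    {μ : Measure Ω} {p : ℝ} (hp : 0 < p) (hne : (Finset.univ : Finset ι).Nonempty)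
    {X : ι → Ω → ℝ} (hX : ∀ i, Measurable (X i)) (hindep : iIndepFun X μ)
    (hlaw : ∀ i, μ.map (X i) = powerLaw p) {ε : ℝ} (hε : 0 < ε) :
    (μ {ω | Finset.univ.sup' hne (fun i => X i ω)
        - Finset.univ.inf' hne (fun i => X i ω) ≤ ε}).toReal
      ≤ ∑ k ∈ Finset.range (⌊1 / ε⌋₊ + 1),
          ((((k:ℝ) + 2) * ε) ^ p - ((k:ℝ) * ε) ^ p) ^ Fintype.card ι := by
  have hae : ∀ᵐ ω ∂μ, ∀ i, X i ω ∈ Icc (0:ℝ) 1 := ae_all_iff.2 fun i =>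
    ae_of_ae_map (hX i).aemeasurable (by rw [hlaw i]; exact ae_mem_Icc_powerLaw p)
  have hinc : ∀ k : ℕ, 0 ≤ (((k:ℝ) + 2) * ε) ^ p - ((k:ℝ) * ε) ^ p := fun k =>
    sub_nonneg.2 (rpow_le_rpow (by positivity) (by gcongr; linarith) hp.le)
  refine ENNReal.toReal_le_of_le_ofReal (Finset.sum_nonneg fun k _ => pow_nonneg (hinc k) _) ?_
  calc _ ≤ μ (⋃ k ∈ Finset.range (⌊1 / ε⌋₊ + 1),
          ⋂ i, X i ⁻¹' Icc ((k:ℝ) * ε) (((k:ℝ) + 2) * ε)) := by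
        refine measure_mono_ae (hae.mono fun ω hω hR => ?_)
        obtain ⟨k, hk, hmem⟩ :=
          exists_forall_mem_Icc_of_sup'_sub_inf'_le hne (fun i _ => hω i) hε hR
        exact mem_iUnion₂.2 ⟨k, Finset.mem_range.2 (Nat.lt_succ_of_le hk),
          mem_iInter.2 fun i => hmem i (Finset.mem_univ i)⟩
    _ ≤ ∑ k ∈ Finset.range (⌊1 / ε⌋₊ + 1),
          μ (⋂ i, X i ⁻¹' Icc ((k:ℝ) * ε) (((k:ℝ) + 2) * ε)) :=
        measure_biUnion_finset_le _ _
    _ = ∑ k ∈ Finset.range (⌊1 / ε⌋₊ + 1),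
          powerLaw p (Icc ((k:ℝ) * ε) (((k:ℝ) + 2) * ε)) ^ Fintype.card ι := by
        simp_rw [hindep.measure_iInter_preimage_eq_pow hX hlaw measurableSet_Icc]
    _ ≤ ∑ k ∈ Finset.range (⌊1 / ε⌋₊ + 1),
          ENNReal.ofReal ((((k:ℝ) + 2) * ε) ^ p - ((k:ℝ) * ε) ^ p) ^ Fintype.card ι := by
        gcongr with k
        exact powerLaw_Icc_le hp (by positivity) (by gcongr; linarith)
    _ = _ := by
        rw [ENNReal.ofReal_sum_of_nonneg fun k _ => pow_nonneg (hinc k) _]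
        simp_rw [ENNReal.ofReal_pow (hinc _)]

lemma isBigO_toReal_measure_sup'_sub_inf'_le {Ω ι : Type*} [MeasurableSpace Ω] [Fintype ι]
    {μ : Measure Ω} {p : ℝ} (hp : 0 < p) (hp1 : p ≤ 1) (hne : (Finset.univ : Finset ι).Nonempty)
    {X : ι → Ω → ℝ} (hX : ∀ i, Measurable (X i)) (hindep : iIndepFun X μ)
    (hlaw : ∀ i, μ.map (X i) = powerLaw p) :
    (fun ε => (μ {ω | Finset.univ.sup' hne (fun i => X i ω)
        - Finset.univ.inf' hne (fun i => X i ω) ≤ ε}).toReal) =O[𝓝[>] 0]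
      fun ε => ε ^ ((Fintype.card ι : ℝ) * p) *
        (1 + ∫ x in (1:ℝ)..1 / ε, x ^ ((p - 1) * Fintype.card ι)) := by
  refine IsBigO.of_bound ((2 ^ p) ^ Fintype.card ι + (2 * p) ^ Fintype.card ι) ?_
  filter_upwards [Ioo_mem_nhdsGT one_pos] with ε ⟨hε0, hε1⟩
  rw [norm_of_nonneg ENNReal.toReal_nonneg]
  exact ((toReal_measure_sup'_sub_inf'_le_le hp hne hX hindep hlaw hε0).trans
    (sum_rpow_mul_add_two_sub_rpow_mul_pow_le hp hp1 _ hε0 hε1.le)).trans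
    (mul_le_mul_of_nonneg_left (le_norm_self _) (by positivity))

theorem range_small_ball_estimate_general
    {Ω : Type*} [MeasurableSpace Ω] (μ : Measure Ω)
    (p : ℝ) (hp : 0 < p) (hp1 : p < 1) (n : ℕ)
    (hne : (Finset.univ : Finset (Fin n)).Nonempty)
    (X : Fin n → Ω → ℝ) (hXm : ∀ i, Measurable (X i))
    (hindep : iIndepFun X μ)
    (hlaw : ∀ i, Measure.map (X i) μ =
      (volume.restrict (Set.Ioc (0:ℝ) 1)).withDensity
        (fun x => ENNReal.ofReal (p * x ^ (p - 1))))
    (R : Ω → ℝ) (hR : ∀ ω, R ω = Finset.univ.sup' hne (fun i => X i ω)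
      - Finset.univ.inf' hne (fun i => X i ω)) :
    ((n : ℝ) * p < (n : ℝ) - 1 →
      ∀ ε ∈ Set.Ioo (0:ℝ) (1/2),
        (∫ t in Set.Icc (1:ℝ) (1/ε - 1), (1 + t) ^ ((p - 1) * ((n:ℝ) - 1)) * t ^ (p - 1))
          ≤ 1 / ((1 - p) * n - 1)) ∧
    ((n : ℝ) * p ≠ (n : ℝ) - 1 →
      (fun ε : ℝ => (μ {ω | R ω ≤ ε}).toReal) =O[nhdsWithin 0 (Set.Ioi 0)]
        (fun ε : ℝ => ε ^ (min ((n:ℝ) * p) ((n:ℝ) - 1)))) ∧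
    ((n : ℝ) * p = (n : ℝ) - 1 →
      (fun ε : ℝ => (μ {ω | R ω ≤ ε}).toReal) =O[nhdsWithin 0 (Set.Ioi 0)]
        (fun ε : ℝ => ε ^ ((n:ℝ) - 1) * Real.log (1/ε))) := by
  have hO := isBigO_toReal_measure_sup'_sub_inf'_le hp hp1.le hne hXm hindep hlaw
  simp only [Fintype.card_fin, ← hR] at hO
  refine ⟨fun h ε hε => ?_, fun h => ?_, fun h => ?_⟩
  · have hb : 1 ≤ 1 / ε - 1 := by
      rw [le_sub_iff_add_le, le_div_iff₀ hε.1]; linarith [hε.2]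
    calc _ ≤ ∫ t in (1:ℝ)..1 / ε - 1, t ^ ((p - 1) * ((n:ℝ) - 1) + (p - 1)) :=
          setIntegral_Icc_one_add_rpow_mul_rpow_le (by nlinarith) hb
      _ ≤ -1 / ((p - 1) * ((n:ℝ) - 1) + (p - 1) + 1) :=
          integral_one_rpow_le_of_lt_neg_one (by nlinarith) (by linarith)
      _ = 1 / ((1 - p) * n - 1) := by rw [neg_div, ← div_neg]; ring_nf
  · rcases h.lt_or_gt with h | h
    · rw [min_eq_left h.le]
      exact hO.trans (isBigO_rpow_mul_one_add_integral_of_lt_neg_one _ (by nlinarith))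
    · rw [min_eq_right h.le]
      convert hO.trans (isBigO_rpow_mul_one_add_integral_of_neg_one_lt _
        (by nlinarith : -1 < (p - 1) * (n:ℝ))) using 3
      ring
  · rw [h, show (p - 1) * (n:ℝ) = -1 by linarith] at hO
    exact hO.trans (isBigO_rpow_mul_one_add_integral_inv _)

theorem range_small_ball_estimate
    {Ω : Type*} [MeasurableSpace Ω] (μ : Measure Ω) [IsProbabilityMeasure μ]
    (p : ℝ) (hp : 0 < p) (hp1 : p < 1) (n : ℕ) (hn : 2 ≤ n)
    (hne : (Finset.univ : Finset (Fin n)).Nonempty)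
    (X : Fin n → Ω → ℝ) (hXm : ∀ i, Measurable (X i))
    (hindep : iIndepFun X μ)
    (hlaw : ∀ i, Measure.map (X i) μ =
      (volume.restrict (Set.Ioc (0:ℝ) 1)).withDensity
        (fun x => ENNReal.ofReal (p * x ^ (p - 1))))
    (R : Ω → ℝ) (hR : ∀ ω, R ω = Finset.univ.sup' hne (fun i => X i ω)
      - Finset.univ.inf' hne (fun i => X i ω)) :
    ((n : ℝ) * p < (n : ℝ) - 1 →
      ∀ ε ∈ Set.Ioo (0:ℝ) (1/2),
        (∫ t in Set.Icc (1:ℝ) (1/ε - 1), (1 + t) ^ ((p - 1) * ((n:ℝ) - 1)) * t ^ (p - 1))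
          ≤ 1 / ((1 - p) * n - 1)) ∧
    ((n : ℝ) * p ≠ (n : ℝ) - 1 →
      (fun ε : ℝ => (μ {ω | R ω ≤ ε}).toReal) =O[nhdsWithin 0 (Set.Ioi 0)]
        (fun ε : ℝ => ε ^ (min ((n:ℝ) * p) ((n:ℝ) - 1)))) ∧
    ((n : ℝ) * p = (n : ℝ) - 1 →
      (fun ε : ℝ => (μ {ω | R ω ≤ ε}).toReal) =O[nhdsWithin 0 (Set.Ioi 0)]
        (fun ε : ℝ => ε ^ ((n:ℝ) - 1) * Real.log (1/ε))) :=
  range_small_ball_estimate_general μ p hp hp1 n hne X hXm hindep hlaw R hR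
end
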